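/- arXiv:1509.02709 — 2 statements merged into one kernel-verified Lean document; each statement's English description precedes it below -/
import Mathlib

section
/- For p ∈ (0,1), the function -1/ln(1-p) satisfies the bounds 1/p - 1 ≤ -1/ln(1-p) ≤ 1/p - 1/2. -/
/-!
Substituting `1 - p = (1 + x)⁻¹`, i.e. `x = p / (1 - p) > 0`, turns `1 / p - 1` into `x⁻¹`,
`1 / p - 1 / 2` into `x⁻¹ + 1 / 2` and `-1 / log (1 - p)` into `(log (1 + x))⁻¹`. The two bounds
are then the reciprocals of the classical estimates `2 x / (x + 2) ≤ log (1 + x) ≤ x`.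
-/

open Real

namespace Real

variable {x : ℝ}

lemma inv_le_inv_log_one_add (hx : 0 < x) : x⁻¹ ≤ (log (1 + x))⁻¹ := by
  have hlog : 0 < log (1 + x) := log_pos (by linarith)
  have hle : log (1 + x) ≤ x := by linarith [log_le_sub_one_of_pos (by linarith : 0 < 1 + x)]
  exact inv_anti₀ hlog hle

lemma inv_log_one_add_le (hx : 0 < x) : (log (1 + x))⁻¹ ≤ x⁻¹ + 1 / 2 := by
  calc (log (1 + x))⁻¹ ≤ (2 * x / (x + 2))⁻¹ :=
        inv_anti₀ (by positivity) (le_log_one_add_of_nonneg hx.le)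
    _ = x⁻¹ + 1 / 2 := by field_simp; ring

lemma neg_log_one_sub_eq_log_one_add {p : ℝ} (hp : p < 1) :
    -log (1 - p) = log (1 + p / (1 - p)) := by
  have h : 1 + p / (1 - p) = (1 - p)⁻¹ := by field_simp [(sub_pos.2 hp).ne']; ring
  rw [h, log_inv]

end Real

theorem neg_inv_log_bounds (p : ℝ) (hp : p ∈ Set.Ioo (0 : ℝ) 1) :
    1 / p - 1 ≤ -1 / Real.log (1 - p) ∧
      -1 / Real.log (1 - p) ≤ 1 / p - 1 / 2 := by
  obtain ⟨hp0, hp1⟩ := hp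
  set x := p / (1 - p) with hx_def
  have hx : 0 < x := div_pos hp0 (sub_pos.2 hp1)
  have hlog : -1 / log (1 - p) = (log (1 + x))⁻¹ := by
    rw [← neg_log_one_sub_eq_log_one_add hp1]; ring
  have hlower : 1 / p - 1 = x⁻¹ := by rw [hx_def]; field_simp
  have hupper : 1 / p - 1 / 2 = x⁻¹ + 1 / 2 := by rw [← hlower]; ring
  rw [hlog, hlower, hupper]
  exact ⟨inv_le_inv_log_one_add hx, inv_log_one_add_le hx⟩
end

section
/- For p ∈ (0,1) and m ≥ 1, the truncated geometric expectation tc(p,m) = (1 - (1-p)^m (pm+1))/(p(1-(1-p)^m)) satisfies 1 ≤ tc(p,m) ≤ min(1/p, (m+1)/2). -/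
/-- Truncated geometric expectation. -/
noncomputable def tc (p : ℝ) (m : ℕ) : ℝ :=
  (1 - (1 - p) ^ m * (p * m + 1)) / (p * (1 - (1 - p) ^ m))

/-!
With `q = 1 - p`, `tc p m` is the mean of `k + 1` under the weights `q ^ k`, `k < m`. Since
`k + 1 ≥ 1` the mean is at least `1`; since `k + 1` increases while the weights decrease,
Chebyshev's sum inequality bounds it by the unweighted mean `(m + 1) / 2`. The bound `1 / p`
amounts to `q ^ m * p * m ≥ 0` in the closed form.
-/

open Finset

lemma one_sub_sq_mul_sum_succ_mul_pow {R : Type*} [CommRing R] (q : R) (m : ℕ) :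
    (1 - q) ^ 2 * ∑ k ∈ range m, ((k : R) + 1) * q ^ k = 1 - q ^ m * ((1 - q) * m + 1) := by
  induction m with
  | zero => simp
  | succ m ih =>
    rw [sum_range_succ, mul_add, ih]
    push_cast
    ring

lemma tc_eq_sum_div_sum {p : ℝ} (hp : p ≠ 0) (m : ℕ) :
    tc p m = (∑ k ∈ range m, ((k : ℝ) + 1) * (1 - p) ^ k) / ∑ k ∈ range m, (1 - p) ^ k := by
  have hsum := one_sub_sq_mul_sum_succ_mul_pow (1 - p) m
  have hgeom := mul_neg_geom_sum (1 - p) m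
  rw [sub_sub_cancel] at hsum hgeom
  rw [tc, ← hgeom, ← mul_assoc, ← sq, ← hsum, mul_div_mul_left _ _ (pow_ne_zero 2 hp)]

section WeightedMean

variable {q : ℝ} {m : ℕ}

lemma one_le_sum_succ_mul_pow_div_sum_pow (hq : 0 ≤ q) (hm : m ≠ 0) :
    1 ≤ (∑ k ∈ range m, ((k : ℝ) + 1) * q ^ k) / ∑ k ∈ range m, q ^ k := by
  rw [one_le_div (geom_sum_pos hq hm)]
  exact sum_le_sum fun k _ =>
    le_mul_of_one_le_left (pow_nonneg hq k) (le_add_of_nonneg_left k.cast_nonneg)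

lemma sum_succ_mul_pow_div_sum_pow_le (hq₀ : 0 ≤ q) (hq₁ : q ≤ 1) (hm : m ≠ 0) :
    (∑ k ∈ range m, ((k : ℝ) + 1) * q ^ k) / ∑ k ∈ range m, q ^ k ≤ ((m : ℝ) + 1) / 2 := by
  have hanti : Antivary (fun k : ℕ => (k : ℝ) + 1) (fun k => q ^ k) :=
    Monotone.antivary (fun _ _ h => by gcongr) (pow_right_anti₀ hq₀ hq₁)
  have hcheb := (hanti.antivaryOn (range m)).card_mul_sum_le_sum_mul_sum
  have hgauss : ∑ k ∈ range m, ((k : ℝ) + 1) = m * (m + 1) / 2 := by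
    rw [eq_div_iff two_ne_zero]
    have h := sum_range_id_mul_two (m + 1)
    simp only [sum_range_succ', add_zero, Nat.add_sub_cancel] at h
    rw [mul_comm (m : ℝ)]
    exact_mod_cast h
  rw [card_range, hgauss] at hcheb
  have hm' : (0 : ℝ) < m := by positivity
  rw [div_le_div_iff₀ (geom_sum_pos hq₀ hm) two_pos]
  nlinarith

end WeightedMean

lemma tc_le_inv {p : ℝ} (hp₀ : 0 < p) (hp₁ : p < 1) {m : ℕ} (hm : m ≠ 0) : tc p m ≤ 1 / p := by
  have hqm : (1 - p) ^ m < 1 := pow_lt_one₀ (by linarith) (by linarith) hm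
  rw [tc, div_le_div_iff₀ (mul_pos hp₀ (by linarith)) hp₀]
  nlinarith [mul_nonneg (pow_nonneg (by linarith : (0 : ℝ) ≤ 1 - p) m)
    (mul_nonneg hp₀.le (m.cast_nonneg : (0 : ℝ) ≤ m))]

theorem tc_bounds (p : ℝ) (hp : p ∈ Set.Ioo (0 : ℝ) 1) (m : ℕ) (hm : 1 ≤ m) :
    1 ≤ tc p m ∧ tc p m ≤ min (1 / p) ((m + 1) / 2) := by
  obtain ⟨hp₀, hp₁⟩ := hp
  have hm₀ : m ≠ 0 := Nat.one_le_iff_ne_zero.mp hm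
  have hq₀ : 0 ≤ 1 - p := by linarith
  have hq₁ : 1 - p ≤ 1 := by linarith
  refine ⟨?_, le_min (tc_le_inv hp₀ hp₁ hm₀) ?_⟩ <;> rw [tc_eq_sum_div_sum hp₀.ne']
  · exact one_le_sum_succ_mul_pow_div_sum_pow hq₀ hm₀
  · exact sum_succ_mul_pow_div_sum_pow_le hq₀ hq₁ hm₀
end
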